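/- Let {X(τ):τ∈S_0} be an admissible family with sup_{τ∈S_0} E[X(τ)] < ∞ and value function v. Fix S∈S_0 and let τ*∈S_S be such that E[X(τ*)]<∞. The following are equivalent: (a) τ* is S-optimal for v(S), i.e. v(S)=E_S[X(τ*)] a.s.; (b) v(τ*)=X(τ*) a.s. and E[v(S)]=E[v(τ*)]; (c) E[v(S)]=E[X(τ*)]. -/

import Mathlib

/-!
The crux is that `v(S)` lies in `Dom(E)` with `E[v(S)] = sup_{τ ∈ S_S} E[X(τ)]`. The family
`{E_S[X(τ)] : τ ∈ S_S}` is upward directed (paste two stopping times along the `F_S`-set where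
one of them does better), so it contains an a.s. increasing sequence whose expectations tend to
the supremum; its limit is `v(S)`, by (H5) it lies in `Dom(E)`, and (H1) yields monotone
convergence of `E`. Then `E[E_S[X(τ*)]] = E[X(τ*)] ≤ E[v(τ*)] ≤ E[v(S)]`, and strict
monotonicity turns each equality of expectations of a.s. ordered variables into a.s. equality.
-/

open MeasureTheory Filter Set

noncomputable section

namespace OptMultStop

variable {Ω : Type*}

/-- A real function is right-continuous with left limits (RCLL) on `[0, T]`. -/
def RCLLOn (f : ℝ → ℝ) (T : ℝ) : Prop :=
  (∀ t ∈ Set.Ico (0 : ℝ) T, ContinuousWithinAt f (Set.Ici t) t) ∧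
    ∀ t ∈ Set.Ioc (0 : ℝ) T, ∃ l : ℝ, Filter.Tendsto f (nhdsWithin t (Set.Iio t)) (nhds l)

/-- A real function is right-continuous on `[0, T)`. -/
def RCOn (f : ℝ → ℝ) (T : ℝ) : Prop :=
  ∀ t ∈ Set.Ico (0 : ℝ) T, ContinuousWithinAt f (Set.Ici t) t

/-- `τ` is a stopping time for `ℱ` taking values in `[s ·, T]`; for `s = S` a stopping
time this encodes membership in `S_S`. -/
def IsStopIn [m : MeasurableSpace Ω] (ℱ : Filtration ℝ m) (T : ℝ) (s τ : Ω → ℝ) : Prop :=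
  IsStoppingTime ℱ (fun ω => (τ ω : WithTop ℝ)) ∧ (∀ ω, s ω ≤ τ ω) ∧ ∀ ω, τ ω ≤ T

/-- Membership in `S_0`: a stopping time with values in `[0, T]`. -/
def Stop0 [m : MeasurableSpace Ω] (ℱ : Filtration ℝ m) (T : ℝ) (τ : Ω → ℝ) : Prop :=
  IsStopIn ℱ T (fun _ => (0 : ℝ)) τ

/-- `g` is an essential supremum of the family of random variables `s`. -/
def IsEssSupFam [MeasurableSpace Ω] (μ : Measure Ω) (s : Set (Ω → ℝ)) (g : Ω → ℝ) : Prop :=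
  (∀ f ∈ s, f ≤ᵐ[μ] g) ∧ ∀ h : Ω → ℝ, (∀ f ∈ s, f ≤ᵐ[μ] h) → g ≤ᵐ[μ] h

/-- `g` is an essential infimum of the family of random variables `s`. -/
def IsEssInfFam [MeasurableSpace Ω] (μ : Measure Ω) (s : Set (Ω → ℝ)) (g : Ω → ℝ) : Prop :=
  (∀ f ∈ s, g ≤ᵐ[μ] f) ∧ ∀ h : Ω → ℝ, (∀ f ∈ s, h ≤ᵐ[μ] f) → h ≤ᵐ[μ] g

/-- An `𝔽`-consistent nonlinear expectation `(E, Dom(E))` on the horizon `[0, T]`,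
together with its conditional versions at stopping times, satisfying the domain
axioms (D1)-(D3), (A1)-(A4) at stopping times, and hypotheses (H0)-(H5). -/
structure FExp [m : MeasurableSpace Ω] (μ : Measure Ω) (T : ℝ) (ℱ : Filtration ℝ m) where
  /-- the domain `Dom(E)` -/
  Dom : Set (Ω → ℝ)
  /-- `cond τ ξ` is the conditional expectation `E_τ[ξ]` at the stopping time `τ` -/
  cond : (Ω → ℝ) → (Ω → ℝ) → Ω → ℝ
  /-- `E0 ξ` is the (deterministic) value `E[ξ] = E_0[ξ]` -/
  E0 : (Ω → ℝ) → ℝ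
  zero_mem : (fun _ => (0 : ℝ)) ∈ Dom
  one_mem : (fun _ => (1 : ℝ)) ∈ Dom
  /-- (H4): all constants belong to the domain -/
  const_mem : ∀ c : ℝ, (fun _ => c) ∈ Dom
  add_mem : ∀ {ξ η : Ω → ℝ}, ξ ∈ Dom → η ∈ Dom → ξ + η ∈ Dom
  indicator_mem : ∀ {ξ : Ω → ℝ}, ξ ∈ Dom → ∀ {A : Set Ω}, MeasurableSet A →
    A.indicator ξ ∈ Dom
  sandwich_mem : ∀ {ξ η : Ω → ℝ}, η ∈ Dom → (∀ᵐ ω ∂μ, 0 ≤ ξ ω ∧ ξ ω ≤ η ω) → ξ ∈ Dom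
  cond_mem : ∀ {τ ξ : Ω → ℝ}, Stop0 ℱ T τ → ξ ∈ Dom → 0 ≤ᵐ[μ] ξ → cond τ ξ ∈ Dom
  cond_nonneg : ∀ {τ ξ : Ω → ℝ}, Stop0 ℱ T τ → ξ ∈ Dom → 0 ≤ᵐ[μ] ξ → 0 ≤ᵐ[μ] cond τ ξ
  /-- `E_τ[ξ]` is `F_τ`-measurable -/
  cond_adapted : ∀ {τ ξ : Ω → ℝ} (hτ : Stop0 ℱ T τ), ξ ∈ Dom → 0 ≤ᵐ[μ] ξ →
    Measurable[hτ.1.measurableSpace] (cond τ ξ)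
  /-- monotonicity -/
  mono : ∀ {τ ξ η : Ω → ℝ}, Stop0 ℱ T τ → ξ ∈ Dom → 0 ≤ᵐ[μ] ξ → η ∈ Dom → 0 ≤ᵐ[μ] η →
    ξ ≤ᵐ[μ] η → cond τ ξ ≤ᵐ[μ] cond τ η
  /-- strict monotonicity -/
  strict_mono : ∀ {τ ξ η : Ω → ℝ}, Stop0 ℱ T τ → ξ ∈ Dom → 0 ≤ᵐ[μ] ξ → η ∈ Dom →
    0 ≤ᵐ[μ] η → ξ ≤ᵐ[μ] η → cond τ ξ =ᵐ[μ] cond τ η → ξ =ᵐ[μ] η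
  /-- time consistency -/
  time_consistent : ∀ {σ τ ξ : Ω → ℝ}, Stop0 ℱ T σ → Stop0 ℱ T τ → (∀ ω, σ ω ≤ τ ω) →
    ξ ∈ Dom → 0 ≤ᵐ[μ] ξ → cond σ (cond τ ξ) =ᵐ[μ] cond σ ξ
  /-- zero-one law -/
  zero_one : ∀ {τ ξ : Ω → ℝ} (hτ : Stop0 ℱ T τ), ξ ∈ Dom → 0 ≤ᵐ[μ] ξ →
    ∀ {A : Set Ω}, MeasurableSet[hτ.1.measurableSpace] A →
    cond τ (A.indicator ξ) =ᵐ[μ] A.indicator (cond τ ξ)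
  /-- translation invariance -/
  translation : ∀ {τ ξ η : Ω → ℝ} (hτ : Stop0 ℱ T τ), ξ ∈ Dom → 0 ≤ᵐ[μ] ξ → η ∈ Dom →
    0 ≤ᵐ[μ] η → Measurable[hτ.1.measurableSpace] η → cond τ (ξ + η) =ᵐ[μ] cond τ ξ + η
  /-- `F_0` is trivial: `E_0[ξ]` is the constant `E0 ξ` -/
  E0_eq : ∀ {ξ : Ω → ℝ}, ξ ∈ Dom → 0 ≤ᵐ[μ] ξ →
    cond (fun _ => (0 : ℝ)) ξ =ᵐ[μ] fun _ => E0 ξ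
  /-- the process `t ↦ E_t[ξ]` has RCLL paths -/
  rcll_paths : ∀ {ξ : Ω → ℝ}, ξ ∈ Dom → 0 ≤ᵐ[μ] ξ →
    ∀ᵐ ω ∂μ, RCLLOn (fun t => cond (fun _ => t) ξ ω) T
  /-- (H0) -/
  h0 : ∀ {A : Set Ω}, MeasurableSet A → 0 < μ A →
    Tendsto (fun n : ℕ => E0 (A.indicator fun _ => (n : ℝ))) atTop atTop
  /-- (H1) -/
  h1 : ∀ {ξ : Ω → ℝ}, ξ ∈ Dom → 0 ≤ᵐ[μ] ξ → ∀ {A : ℕ → Set Ω},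
    (∀ n, MeasurableSet (A n)) → Monotone A → (∀ᵐ ω ∂μ, ω ∈ ⋃ n, A n) →
    Tendsto (fun n => E0 ((A n).indicator ξ)) atTop (nhds (E0 ξ))
  /-- (H2) -/
  h2 : ∀ {ξ η : Ω → ℝ}, ξ ∈ Dom → 0 ≤ᵐ[μ] ξ → η ∈ Dom → 0 ≤ᵐ[μ] η →
    ∀ {A : ℕ → Set Ω}, (∀ n, MeasurableSet (A n)) → Antitone A →
    (∀ᵐ ω ∂μ, ω ∉ ⋂ n, A n) →
    Tendsto (fun n => E0 (ξ + (A n).indicator η)) atTop (nhds (E0 ξ))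
  /-- (H5) -/
  h5 : ∀ {ξ : ℕ → Ω → ℝ} {ζ : Ω → ℝ}, (∀ n, ξ n ∈ Dom) → (∀ n, 0 ≤ᵐ[μ] ξ n) →
    (∀ᵐ ω ∂μ, Tendsto (fun n => ξ n ω) atTop (nhds (ζ ω))) →
    (∃ C : ℝ, ∃ᶠ n in atTop, E0 (ξ n) ≤ C) → ζ ∈ Dom

variable [m : MeasurableSpace Ω] {μ : Measure Ω} {T : ℝ} {ℱ : Filtration ℝ m}

/-- (H6): sub-additivity. -/
def FExp.Subadditive (𝔈 : FExp μ T ℱ) : Prop :=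
  ∀ ⦃τ ξ η : Ω → ℝ⦄, Stop0 ℱ T τ → ξ ∈ 𝔈.Dom → 0 ≤ᵐ[μ] ξ → η ∈ 𝔈.Dom → 0 ≤ᵐ[μ] η →
    𝔈.cond τ (ξ + η) ≤ᵐ[μ] 𝔈.cond τ ξ + 𝔈.cond τ η

/-- (H7): positive homogeneity. -/
def FExp.PosHom (𝔈 : FExp μ T ℱ) : Prop :=
  ∀ ⦃τ ξ : Ω → ℝ⦄ (l : ℝ), 0 ≤ l → Stop0 ℱ T τ → ξ ∈ 𝔈.Dom → 0 ≤ᵐ[μ] ξ →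
    𝔈.cond τ (fun ω => l * ξ ω) =ᵐ[μ] fun ω => l * 𝔈.cond τ ξ ω

/-- Admissible family of rewards indexed by stopping times. -/
def Admissible (𝔈 : FExp μ T ℱ) (X : (Ω → ℝ) → Ω → ℝ) : Prop :=
  (∀ τ : Ω → ℝ, ∀ hτ : Stop0 ℱ T τ, X τ ∈ 𝔈.Dom ∧ 0 ≤ᵐ[μ] X τ ∧
      Measurable[hτ.1.measurableSpace] (X τ)) ∧
    ∀ τ σ : Ω → ℝ, Stop0 ℱ T τ → Stop0 ℱ T σ →
      ∀ᵐ ω ∂μ, τ ω = σ ω → X τ ω = X σ ω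

/-- `sup_{τ ∈ S_0} E[X(τ)] < ∞`. -/
def BddRewardE0 (𝔈 : FExp μ T ℱ) (X : (Ω → ℝ) → Ω → ℝ) : Prop :=
  ∃ C : ℝ, ∀ τ : Ω → ℝ, Stop0 ℱ T τ → 𝔈.E0 (X τ) ≤ C

/-- `v` is the value function family of the single stopping problem for the reward `X`:
`v(S) = esssup_{τ ∈ S_S} E_S[X(τ)]`. -/
def IsValueFam (𝔈 : FExp μ T ℱ) (X v : (Ω → ℝ) → Ω → ℝ) : Prop :=
  ∀ S : Ω → ℝ, Stop0 ℱ T S →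
    IsEssSupFam μ {g | ∃ τ : Ω → ℝ, IsStopIn ℱ T S τ ∧ g = 𝔈.cond S (X τ)} (v S)

/-- An `E`-supermartingale system. -/
def SupermartSys (𝔈 : FExp μ T ℱ) (h : (Ω → ℝ) → Ω → ℝ) : Prop :=
  (∀ τ : Ω → ℝ, ∀ hτ : Stop0 ℱ T τ, h τ ∈ 𝔈.Dom ∧ 0 ≤ᵐ[μ] h τ ∧
      Measurable[hτ.1.measurableSpace] (h τ)) ∧
    ∀ τ σ : Ω → ℝ, Stop0 ℱ T τ → Stop0 ℱ T σ → (∀ᵐ ω ∂μ, τ ω ≤ σ ω) →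
      𝔈.cond τ (h σ) ≤ᵐ[μ] h τ

/-- Right-continuity along stopping times in `E`-expectation (RCE). -/
def RCE (𝔈 : FExp μ T ℱ) (X : (Ω → ℝ) → Ω → ℝ) : Prop :=
  ∀ τ : Ω → ℝ, Stop0 ℱ T τ → ∀ τs : ℕ → Ω → ℝ, (∀ n, Stop0 ℱ T (τs n)) →
    (∀ᵐ ω ∂μ, Antitone (fun n => τs n ω) ∧
      Tendsto (fun n => τs n ω) atTop (nhds (τ ω))) →
    Tendsto (fun n => 𝔈.E0 (X (τs n))) atTop (nhds (𝔈.E0 (X τ)))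

/-- Left-continuity along stopping times in `E`-expectation (LCE). -/
def LCE (𝔈 : FExp μ T ℱ) (X : (Ω → ℝ) → Ω → ℝ) : Prop :=
  ∀ τ : Ω → ℝ, Stop0 ℱ T τ → ∀ τs : ℕ → Ω → ℝ, (∀ n, Stop0 ℱ T (τs n)) →
    (∀ᵐ ω ∂μ, Monotone (fun n => τs n ω) ∧
      Tendsto (fun n => τs n ω) atTop (nhds (τ ω))) →
    Tendsto (fun n => 𝔈.E0 (X (τs n))) atTop (nhds (𝔈.E0 (X τ)))

/-- Continuity along stopping times in `E`-expectation (CE). -/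
def CE (𝔈 : FExp μ T ℱ) (X : (Ω → ℝ) → Ω → ℝ) : Prop :=
  RCE 𝔈 X ∧ LCE 𝔈 X

/-- Right-continuity along stopping times (RC): a.s. pointwise convergence. -/
def RCfam (𝔈 : FExp μ T ℱ) (X : (Ω → ℝ) → Ω → ℝ) : Prop :=
  ∀ τ : Ω → ℝ, Stop0 ℱ T τ → ∀ τs : ℕ → Ω → ℝ, (∀ n, Stop0 ℱ T (τs n)) →
    (∀ᵐ ω ∂μ, Antitone (fun n => τs n ω) ∧
      Tendsto (fun n => τs n ω) atTop (nhds (τ ω))) →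
    ∀ᵐ ω ∂μ, Tendsto (fun n => X (τs n) ω) atTop (nhds (X τ ω))

/-- Biadmissible family of rewards indexed by pairs of stopping times. -/
def Biadmissible (𝔈 : FExp μ T ℱ) (X : (Ω → ℝ) → (Ω → ℝ) → Ω → ℝ) : Prop :=
  (∀ τ σ : Ω → ℝ, ∀ hτ : Stop0 ℱ T τ, ∀ hσ : Stop0 ℱ T σ,
      X τ σ ∈ 𝔈.Dom ∧ 0 ≤ᵐ[μ] X τ σ ∧
      Measurable[(hτ.1.max hσ.1).measurableSpace] (X τ σ)) ∧
    ∀ τ σ τ' σ' : Ω → ℝ, Stop0 ℱ T τ → Stop0 ℱ T σ → Stop0 ℱ T τ' → Stop0 ℱ T σ' →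
      ∀ᵐ ω ∂μ, τ ω = τ' ω → σ ω = σ' ω → X τ σ ω = X τ' σ' ω

/-- `sup_{τ,σ ∈ S_0} E[X(τ,σ)] < ∞`. -/
def BddReward2E0 (𝔈 : FExp μ T ℱ) (X : (Ω → ℝ) → (Ω → ℝ) → Ω → ℝ) : Prop :=
  ∃ C : ℝ, ∀ τ σ : Ω → ℝ, Stop0 ℱ T τ → Stop0 ℱ T σ → 𝔈.E0 (X τ σ) ≤ C

/-- `v` is the value function family of the double stopping problem:
`v(S) = esssup_{τ₁,τ₂ ∈ S_S} E_S[X(τ₁,τ₂)]`. -/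
def IsValueFam2 (𝔈 : FExp μ T ℱ) (X : (Ω → ℝ) → (Ω → ℝ) → Ω → ℝ)
    (v : (Ω → ℝ) → Ω → ℝ) : Prop :=
  ∀ S : Ω → ℝ, Stop0 ℱ T S →
    IsEssSupFam μ
      {g | ∃ τ₁ τ₂ : Ω → ℝ, IsStopIn ℱ T S τ₁ ∧ IsStopIn ℱ T S τ₂ ∧
        g = 𝔈.cond S (X τ₁ τ₂)} (v S)

/-- `u₁(θ) = esssup_{τ₁ ∈ S_θ} E_θ[X(τ₁, θ)]`. -/
def IsU1 (𝔈 : FExp μ T ℱ) (X : (Ω → ℝ) → (Ω → ℝ) → Ω → ℝ) (u₁ : (Ω → ℝ) → Ω → ℝ) : Prop :=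
  ∀ θ : Ω → ℝ, Stop0 ℱ T θ →
    IsEssSupFam μ {g | ∃ τ : Ω → ℝ, IsStopIn ℱ T θ τ ∧ g = 𝔈.cond θ (X τ θ)} (u₁ θ)

/-- `u₂(θ) = esssup_{τ₂ ∈ S_θ} E_θ[X(θ, τ₂)]`. -/
def IsU2 (𝔈 : FExp μ T ℱ) (X : (Ω → ℝ) → (Ω → ℝ) → Ω → ℝ) (u₂ : (Ω → ℝ) → Ω → ℝ) : Prop :=
  ∀ θ : Ω → ℝ, Stop0 ℱ T θ →
    IsEssSupFam μ {g | ∃ τ : Ω → ℝ, IsStopIn ℱ T θ τ ∧ g = 𝔈.cond θ (X θ τ)} (u₂ θ)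

/-- Uniform right-continuity of a biadmissible family along stopping times in
`ℰ`-expectation (URCℰ). -/
def URCE2 (ℰ : FExp μ T ℱ) (X : (Ω → ℝ) → (Ω → ℝ) → Ω → ℝ) : Prop :=
  ∀ σ : Ω → ℝ, Stop0 ℱ T σ → ∀ σs : ℕ → Ω → ℝ, (∀ n, Stop0 ℱ T (σs n)) →
    (∀ᵐ ω ∂μ, Antitone (fun n => σs n ω) ∧
      Tendsto (fun n => σs n ω) atTop (nhds (σ ω))) →
    ∀ ε : ℝ, 0 < ε → ∃ N : ℕ, ∀ n ≥ N, ∀ τ : Ω → ℝ, Stop0 ℱ T τ →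
      ℰ.E0 (fun ω => |X τ σ ω - X τ (σs n) ω|) ≤ ε ∧
      ℰ.E0 (fun ω => |X σ τ ω - X (σs n) τ ω|) ≤ ε

/-- Uniform left-continuity of a biadmissible family along stopping times in
`ℰ`-expectation (ULCℰ). -/
def ULCE2 (ℰ : FExp μ T ℱ) (X : (Ω → ℝ) → (Ω → ℝ) → Ω → ℝ) : Prop :=
  ∀ σ : Ω → ℝ, Stop0 ℱ T σ → ∀ σs : ℕ → Ω → ℝ, (∀ n, Stop0 ℱ T (σs n)) →
    (∀ᵐ ω ∂μ, Monotone (fun n => σs n ω) ∧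
      Tendsto (fun n => σs n ω) atTop (nhds (σ ω))) →
    ∀ ε : ℝ, 0 < ε → ∃ N : ℕ, ∀ n ≥ N, ∀ τ : Ω → ℝ, Stop0 ℱ T τ →
      ℰ.E0 (fun ω => |X τ σ ω - X τ (σs n) ω|) ≤ ε ∧
      ℰ.E0 (fun ω => |X σ τ ω - X (σs n) τ ω|) ≤ ε

/-- Uniform continuity (UCℰ) of a biadmissible family. -/
def UCE2 (ℰ : FExp μ T ℱ) (X : (Ω → ℝ) → (Ω → ℝ) → Ω → ℝ) : Prop :=
  URCE2 ℰ X ∧ ULCE2 ℰ X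

/-- `(E, Dom(E))` is dominated by `(Ẽ, Dom(Ẽ))`. -/
def Dominated (𝔈 𝔉 : FExp μ T ℱ) : Prop :=
  𝔈.Dom ⊆ 𝔉.Dom ∧
    ∀ τ : Ω → ℝ, Stop0 ℱ T τ → ∀ ξ η : Ω → ℝ, ξ ∈ 𝔈.Dom → η ∈ 𝔈.Dom →
      ∀ᵐ ω ∂μ, 𝔈.cond τ (ξ + η) ω - 𝔈.cond τ η ω ≤ 𝔉.cond τ ξ ω

/-- The filtration contains all `μ`-null sets (part of the usual conditions). -/
def CompleteFiltration (μ : Measure Ω) (ℱ : Filtration ℝ m) : Prop :=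
  ∀ s : Set Ω, μ s = 0 → ∀ t : ℝ, MeasurableSet[ℱ t] s

/-- The filtration is right-continuous (part of the usual conditions). -/
def RightContinuousFiltration (ℱ : Filtration ℝ m) : Prop :=
  ∀ t : ℝ, (ℱ t : MeasurableSpace Ω) = ⨅ u ∈ Set.Ioi t, ℱ u

/-- A `d`-tuple of stopping times, all in `S_s`. -/
def StopVec (ℱ : Filtration ℝ m) (T : ℝ) (s : Ω → ℝ) {d : ℕ} (τ : Fin d → Ω → ℝ) : Prop :=
  ∀ i, IsStopIn ℱ T s (τ i)

/-- A `d`-admissible family of rewards. -/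
def DAdmissible (𝔈 : FExp μ T ℱ) {d : ℕ} (X : (Fin d → Ω → ℝ) → Ω → ℝ) : Prop :=
  (∀ τ : Fin d → Ω → ℝ, StopVec ℱ T (fun _ => (0 : ℝ)) τ →
      X τ ∈ 𝔈.Dom ∧ 0 ≤ᵐ[μ] X τ ∧
      ∀ h : IsStoppingTime ℱ fun ω => ((⨆ i, τ i ω : ℝ) : WithTop ℝ),
        Measurable[h.measurableSpace] (X τ)) ∧
    ∀ τ σ : Fin d → Ω → ℝ, StopVec ℱ T (fun _ => (0 : ℝ)) τ →
      StopVec ℱ T (fun _ => (0 : ℝ)) σ →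
      ∀ᵐ ω ∂μ, (∀ i, τ i ω = σ i ω) → X τ ω = X σ ω

/-- `sup_{τ ∈ S_0^d} E[X(τ)] < ∞`. -/
def BddRewardDE0 (𝔈 : FExp μ T ℱ) {d : ℕ} (X : (Fin d → Ω → ℝ) → Ω → ℝ) : Prop :=
  ∃ C : ℝ, ∀ τ : Fin d → Ω → ℝ, StopVec ℱ T (fun _ => (0 : ℝ)) τ → 𝔈.E0 (X τ) ≤ C

/-- `v` is the value function family of the `d`-stopping problem:
`v(S) = esssup_{τ ∈ S_S^d} E_S[X(τ)]`. -/
def IsValueFamD (𝔈 : FExp μ T ℱ) {d : ℕ} (X : (Fin d → Ω → ℝ) → Ω → ℝ)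
    (v : (Ω → ℝ) → Ω → ℝ) : Prop :=
  ∀ S : Ω → ℝ, Stop0 ℱ T S →
    IsEssSupFam μ
      {g | ∃ τ : Fin d → Ω → ℝ, StopVec ℱ T S τ ∧ g = 𝔈.cond S (X τ)} (v S)

/-- `u^{(i)}(θ) = esssup_{τ ∈ S_θ^{d-1}} E_θ[X^{(i)}(τ, θ)]`, where `X^{(i)}(τ, θ)`
inserts `θ` in the `i`-th slot. -/
def IsUi (𝔈 : FExp μ T ℱ) {d : ℕ} (X : (Fin (d + 1) → Ω → ℝ) → Ω → ℝ)
    (ui : Fin (d + 1) → (Ω → ℝ) → Ω → ℝ) : Prop :=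
  ∀ i : Fin (d + 1), ∀ θ : Ω → ℝ, Stop0 ℱ T θ →
    IsEssSupFam μ
      {g | ∃ τ : Fin d → Ω → ℝ, StopVec ℱ T θ τ ∧ g = 𝔈.cond θ (X (i.insertNth θ τ))}
      (ui i θ)

/-- Uniform continuity (UCE) of a `d`-admissible family along monotone sequences of
stopping times. -/
def UCED (𝔈 : FExp μ T ℱ) {d : ℕ} (X : (Fin (d + 1) → Ω → ℝ) → Ω → ℝ) : Prop :=
  ∀ i : Fin (d + 1), ∀ S : Ω → ℝ, Stop0 ℱ T S → ∀ Ss : ℕ → Ω → ℝ,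
    (∀ n, Stop0 ℱ T (Ss n)) →
    ((∀ᵐ ω ∂μ, Monotone fun n => Ss n ω) ∨ (∀ᵐ ω ∂μ, Antitone fun n => Ss n ω)) →
    (∀ᵐ ω ∂μ, Tendsto (fun n => Ss n ω) atTop (nhds (S ω))) →
    ∀ ε : ℝ, 0 < ε → ∃ N : ℕ, ∀ n ≥ N, ∀ θ : Fin d → Ω → ℝ,
      StopVec ℱ T (fun _ => (0 : ℝ)) θ →
      𝔈.E0 (fun ω => |X (i.insertNth (Ss n) θ) ω - X (i.insertNth S θ) ω|) ≤ ε

variable {S τ σ ξ η : Ω → ℝ} {𝔈 : FExp μ T ℱ} {X v : (Ω → ℝ) → Ω → ℝ}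

theorem IsStopIn.mono_left {s s' : Ω → ℝ} (h : IsStopIn ℱ T s τ) (hs : ∀ ω, s' ω ≤ s ω) :
    IsStopIn ℱ T s' τ :=
  ⟨h.1, fun ω => (hs ω).trans (h.2.1 ω), h.2.2⟩

theorem IsStopIn.stop0 (hτ : IsStopIn ℱ T S τ) (hS : Stop0 ℱ T S) : Stop0 ℱ T τ :=
  hτ.mono_left hS.2.1

theorem IsStopIn.self {s : Ω → ℝ} (h : IsStopIn ℱ T s S) : IsStopIn ℱ T S S :=
  ⟨h.1, fun _ => le_rfl, h.2.2⟩

theorem stop0_zero (hT : 0 ≤ T) : Stop0 ℱ T fun _ => 0 :=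
  ⟨isStoppingTime_const ℱ 0, fun _ => le_rfl, fun _ => hT⟩

theorem IsStopIn.piecewise {s : Ω → ℝ} (hS : IsStopIn ℱ T s S) (hτ : IsStopIn ℱ T S τ)
    (hσ : IsStopIn ℱ T S σ) {A : Set Ω} [DecidablePred (· ∈ A)]
    (hA : MeasurableSet[hS.1.measurableSpace] A) : IsStopIn ℱ T S (A.piecewise τ σ) := by
  have hinter {ρ : Ω → ℝ} (hρ : IsStopIn ℱ T S ρ) {B : Set Ω}
      (hB : MeasurableSet[hS.1.measurableSpace] B) (t : ℝ) :
      MeasurableSet[ℱ t] (B ∩ {ω | (ρ ω : WithTop ℝ) ≤ t}) :=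
    (hS.1.measurableSpace_mono hρ.1 (fun ω => WithTop.coe_le_coe.2 (hρ.2.1 ω)) _ hB).2 t
  refine ⟨fun t => ?_, fun ω => ?_, fun ω => ?_⟩
  · have hset : {ω | ((A.piecewise τ σ ω : ℝ) : WithTop ℝ) ≤ t}
        = A ∩ {ω | (τ ω : WithTop ℝ) ≤ t} ∪ Aᶜ ∩ {ω | (σ ω : WithTop ℝ) ≤ t} := by
      ext ω
      by_cases hω : ω ∈ A <;> simp [hω]
    rw [hset]
    exact (hinter hτ hA t).union (hinter hσ hA.compl t)
  · by_cases hω : ω ∈ A <;> simp [hω, hτ.2.1 ω, hσ.2.1 ω]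
  · by_cases hω : ω ∈ A <;> simp [hω, hτ.2.2 ω, hσ.2.2 ω]

theorem _root_.DirectedOn.exists_seq_rel {α : Type*} {r : α → α → Prop} {s : Set α}
    (hs : DirectedOn r s) {x : ℕ → α} (hx : ∀ n, x n ∈ s) :
    ∃ y : ℕ → α, (∀ n, y n ∈ s) ∧ (∀ n, r (x n) (y n)) ∧ ∀ n, r (y n) (y (n + 1)) := by
  have : Nonempty α := ⟨x 0⟩
  choose! z hz_mem hz_left hz_right using hs
  let y : ℕ → α := fun n => Nat.rec (z (x 0) (x 0)) (fun k yk => z (x (k + 1)) yk) n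
  have hy : ∀ n, y n ∈ s := fun n =>
    Nat.rec (hz_mem _ (hx 0) _ (hx 0)) (fun k hk => hz_mem _ (hx (k + 1)) _ hk) n
  refine ⟨y, hy, fun n => ?_, fun n => hz_right _ (hx (n + 1)) _ (hy n)⟩
  cases n with
  | zero => exact hz_left _ (hx 0) _ (hx 0)
  | succ k => exact hz_left _ (hx (k + 1)) _ (hy k)

namespace FExp

/-- `Dom⁺(E)`. -/
def DomPos (𝔈 : FExp μ T ℱ) : Set (Ω → ℝ) :=
  {ξ | ξ ∈ 𝔈.Dom ∧ 0 ≤ᵐ[μ] ξ}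

theorem mem_domPos_of_ae_le (hη : η ∈ 𝔈.DomPos) (hξ0 : 0 ≤ᵐ[μ] ξ) (h : ξ ≤ᵐ[μ] η) :
    ξ ∈ 𝔈.DomPos :=
  ⟨𝔈.sandwich_mem hη.1 (hξ0.and h), hξ0⟩

theorem indicator_mem_domPos (hξ : ξ ∈ 𝔈.DomPos) {A : Set Ω} (hA : MeasurableSet A) :
    A.indicator ξ ∈ 𝔈.DomPos :=
  ⟨𝔈.indicator_mem hξ.1 hA, hξ.2.mono fun _ h => Set.indicator_apply_nonneg fun _ => h⟩

theorem cond_mem_domPos (hτ : Stop0 ℱ T τ) (hξ : ξ ∈ 𝔈.DomPos) : 𝔈.cond τ ξ ∈ 𝔈.DomPos :=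
  ⟨𝔈.cond_mem hτ hξ.1 hξ.2, 𝔈.cond_nonneg hτ hξ.1 hξ.2⟩

theorem measurable_cond (hτ : Stop0 ℱ T τ) (hξ : ξ ∈ 𝔈.DomPos) : Measurable (𝔈.cond τ ξ) :=
  (𝔈.cond_adapted hτ hξ.1 hξ.2).mono hτ.1.measurableSpace_le le_rfl

theorem cond_congr (hτ : Stop0 ℱ T τ) (hξ : ξ ∈ 𝔈.DomPos) (hη : η ∈ 𝔈.DomPos)
    (h : ξ =ᵐ[μ] η) : 𝔈.cond τ ξ =ᵐ[μ] 𝔈.cond τ η :=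
  (𝔈.mono hτ hξ.1 hξ.2 hη.1 hη.2 h.le).antisymm (𝔈.mono hτ hη.1 hη.2 hξ.1 hξ.2 h.symm.le)

theorem indicator_cond_congr (hτ : Stop0 ℱ T τ) {A : Set Ω}
    (hA : MeasurableSet[hτ.1.measurableSpace] A) (hξ : ξ ∈ 𝔈.DomPos) (hη : η ∈ 𝔈.DomPos)
    (h : A.indicator ξ =ᵐ[μ] A.indicator η) :
    A.indicator (𝔈.cond τ ξ) =ᵐ[μ] A.indicator (𝔈.cond τ η) := by
  have hAm : MeasurableSet A := hτ.1.measurableSpace_le _ hA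
  exact (𝔈.zero_one hτ hξ.1 hξ.2 hA).symm.trans <|
    (𝔈.cond_congr hτ (indicator_mem_domPos hξ hAm) (indicator_mem_domPos hη hAm) h).trans
      (𝔈.zero_one hτ hη.1 hη.2 hA)

theorem cond_zero (hτ : Stop0 ℱ T τ) : 𝔈.cond τ (fun _ => 0) =ᵐ[μ] fun _ => 0 := by
  simpa using 𝔈.zero_one hτ 𝔈.zero_mem (ae_of_all _ fun _ => le_rfl)
    (@MeasurableSet.empty _ hτ.1.measurableSpace)

theorem cond_of_measurable (hτ : Stop0 ℱ T τ) (hξ : ξ ∈ 𝔈.DomPos)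
    (hξm : Measurable[hτ.1.measurableSpace] ξ) : 𝔈.cond τ ξ =ᵐ[μ] ξ := by
  have h := 𝔈.translation hτ 𝔈.zero_mem (ae_of_all _ fun _ => le_rfl) hξ.1 hξ.2 hξm
  rw [show (fun _ => (0 : ℝ)) + ξ = ξ from zero_add ξ] at h
  filter_upwards [h, 𝔈.cond_zero hτ] with ω h h0
  simpa [h0] using h

theorem ae_eq_of_le_of_E0_eq (hT : 0 ≤ T) (hξ : ξ ∈ 𝔈.DomPos) (hη : η ∈ 𝔈.DomPos)
    (hle : ξ ≤ᵐ[μ] η) (h : 𝔈.E0 ξ = 𝔈.E0 η) : ξ =ᵐ[μ] η := by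
  refine 𝔈.strict_mono (stop0_zero hT) hξ.1 hξ.2 hη.1 hη.2 hle ?_
  filter_upwards [𝔈.E0_eq hξ.1 hξ.2, 𝔈.E0_eq hη.1 hη.2] with ω h₁ h₂
  rw [h₁, h₂, h]

variable [NeZero μ]

theorem E0_mono (hT : 0 ≤ T) (hξ : ξ ∈ 𝔈.DomPos) (hη : η ∈ 𝔈.DomPos) (h : ξ ≤ᵐ[μ] η) :
    𝔈.E0 ξ ≤ 𝔈.E0 η := by
  refine (eventually_const (f := ae μ)).1 ?_
  filter_upwards [𝔈.E0_eq hξ.1 hξ.2, 𝔈.E0_eq hη.1 hη.2,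
    𝔈.mono (stop0_zero hT) hξ.1 hξ.2 hη.1 hη.2 h] with ω h₁ h₂ h₃
  rwa [h₁, h₂] at h₃

theorem E0_congr (hT : 0 ≤ T) (hξ : ξ ∈ 𝔈.DomPos) (hη : η ∈ 𝔈.DomPos) (h : ξ =ᵐ[μ] η) :
    𝔈.E0 ξ = 𝔈.E0 η :=
  (𝔈.E0_mono hT hξ hη h.le).antisymm (𝔈.E0_mono hT hη hξ h.symm.le)

theorem E0_cond (hT : 0 ≤ T) (hτ : Stop0 ℱ T τ) (hξ : ξ ∈ 𝔈.DomPos) :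
    𝔈.E0 (𝔈.cond τ ξ) = 𝔈.E0 ξ := by
  have hc := 𝔈.cond_mem_domPos hτ hξ
  refine (eventually_const (f := ae μ)).1 ?_
  filter_upwards [𝔈.E0_eq hc.1 hc.2, 𝔈.E0_eq hξ.1 hξ.2,
    𝔈.time_consistent (stop0_zero hT) hτ hτ.2.1 hξ.1 hξ.2] with ω h₁ h₂ h₃
  rw [← h₁, ← h₂, h₃]

theorem E0_add_const (hT : 0 ≤ T) (hξ : ξ ∈ 𝔈.DomPos) {c : ℝ} (hc : 0 ≤ c) :
    𝔈.E0 (ξ + fun _ => c) = 𝔈.E0 ξ + c := by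
  have hξc : (ξ + fun _ => c) ∈ 𝔈.DomPos :=
    ⟨𝔈.add_mem hξ.1 (𝔈.const_mem c), hξ.2.mono fun _ h => add_nonneg h hc⟩
  refine (eventually_const (f := ae μ)).1 ?_
  filter_upwards [𝔈.E0_eq hξc.1 hξc.2, 𝔈.E0_eq hξ.1 hξ.2,
    𝔈.translation (stop0_zero hT) hξ.1 hξ.2 (𝔈.const_mem c) (ae_of_all _ fun _ => hc)
      measurable_const] with ω h₁ h₂ h₃
  rw [← h₁, ← h₂, h₃, Pi.add_apply]

theorem E0_le_of_monotone_tendsto (hT : 0 ≤ T) {ξ : ℕ → Ω → ℝ} {ζ : Ω → ℝ} {L : ℝ}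
    (hξ : ∀ n, ξ n ∈ 𝔈.DomPos) (hξm : ∀ n, Measurable (ξ n)) (hζ : ζ ∈ 𝔈.DomPos)
    (hζm : Measurable ζ) (hmono : ∀ᵐ ω ∂μ, Monotone fun n => ξ n ω)
    (hlim : ∀ᵐ ω ∂μ, Tendsto (fun n => ξ n ω) atTop (nhds (ζ ω)))
    (hL : ∀ n, 𝔈.E0 (ξ n) ≤ L) : 𝔈.E0 ζ ≤ L := by
  refine le_of_forall_pos_le_add fun ε hε => ?_
  -- The union over `k ≤ n` keeps `A` monotone although `ξ` is only a.e. monotone.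
  set A : ℕ → Set Ω := fun n => ⋃ k ≤ n, {ω | ζ ω - ε < ξ k ω} with hA
  have hAm : ∀ n, MeasurableSet (A n) := fun n =>
    .iUnion fun k => .iUnion fun _ => measurableSet_lt (hζm.sub measurable_const) (hξm k)
  have hAmono : Monotone A := fun a b hab ω hω => by
    simp only [hA, mem_iUnion] at hω ⊢
    obtain ⟨k, hk, h⟩ := hω
    exact ⟨k, hk.trans hab, h⟩
  have hAcover : ∀ᵐ ω ∂μ, ω ∈ ⋃ n, A n := by
    filter_upwards [hlim] with ω h
    obtain ⟨n, hn⟩ := (h.eventually (eventually_gt_nhds (sub_lt_self _ hε))).exists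
    exact mem_iUnion.2 ⟨n, mem_iUnion₂.2 ⟨n, le_rfl, hn⟩⟩
  have hAζ : ∀ n, 𝔈.E0 ((A n).indicator ζ) ≤ L + ε := fun n => calc
    𝔈.E0 ((A n).indicator ζ) ≤ 𝔈.E0 (ξ n + fun _ => ε) := by
      refine 𝔈.E0_mono hT (indicator_mem_domPos hζ (hAm n))
        ⟨𝔈.add_mem (hξ n).1 (𝔈.const_mem ε), (hξ n).2.mono fun _ h => add_nonneg h hε.le⟩ ?_
      filter_upwards [hmono, (hξ n).2] with ω hω h0
      by_cases hωA : ω ∈ A n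
      · obtain ⟨k, hk, hkω⟩ := mem_iUnion₂.1 hωA
        rw [indicator_of_mem hωA, Pi.add_apply]
        linarith [hω hk, show ζ ω - ε < ξ k ω from hkω]
      · rw [indicator_of_notMem hωA, Pi.add_apply]
        linarith [show (0 : ℝ) ≤ ξ n ω from h0]
    _ = 𝔈.E0 (ξ n) + ε := 𝔈.E0_add_const hT (hξ n) hε.le
    _ ≤ L + ε := by linarith [hL n]
  exact le_of_tendsto (𝔈.h1 hζ.1 hζ.2 hAm hAmono hAcover) (.of_forall hAζ)

theorem tendsto_E0_of_monotone (hT : 0 ≤ T) {ξ : ℕ → Ω → ℝ} {ζ : Ω → ℝ} {C : ℝ}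
    (hξ : ∀ n, ξ n ∈ 𝔈.DomPos) (hξm : ∀ n, Measurable (ξ n)) (hζm : Measurable ζ)
    (hmono : ∀ᵐ ω ∂μ, Monotone fun n => ξ n ω)
    (hlim : ∀ᵐ ω ∂μ, Tendsto (fun n => ξ n ω) atTop (nhds (ζ ω)))
    (hC : ∀ n, 𝔈.E0 (ξ n) ≤ C) :
    ζ ∈ 𝔈.DomPos ∧ Tendsto (fun n => 𝔈.E0 (ξ n)) atTop (nhds (𝔈.E0 ζ)) := by
  have hle : ∀ n, ξ n ≤ᵐ[μ] ζ := fun n => by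
    filter_upwards [hmono, hlim] with ω hm hl using hm.ge_of_tendsto hl n
  have hζ : ζ ∈ 𝔈.DomPos := ⟨𝔈.h5 (fun n => (hξ n).1) (fun n => (hξ n).2) hlim
    ⟨C, .of_forall hC⟩, (hξ 0).2.trans (hle 0)⟩
  have hE0mono : Monotone fun n => 𝔈.E0 (ξ n) := monotone_nat_of_le_succ fun n =>
    𝔈.E0_mono hT (hξ n) (hξ (n + 1)) (hmono.mono fun _ h => h n.le_succ)
  have hbdd : BddAbove (range fun n => 𝔈.E0 (ξ n)) :=
    ⟨𝔈.E0 ζ, forall_mem_range.2 fun n => 𝔈.E0_mono hT (hξ n) hζ (hle n)⟩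
  have hsup : ⨆ n, 𝔈.E0 (ξ n) = 𝔈.E0 ζ :=
    (ciSup_le fun n => 𝔈.E0_mono hT (hξ n) hζ (hle n)).antisymm
      (𝔈.E0_le_of_monotone_tendsto hT hξ hξm hζ hζm hmono hlim (le_ciSup hbdd))
  exact ⟨hζ, hsup ▸ tendsto_atTop_ciSup hE0mono hbdd⟩

theorem exists_seq_tendsto_sSup_E0 (hT : 0 ≤ T) {𝒢 : Set (Ω → ℝ)} (h𝒢 : 𝒢 ⊆ 𝔈.DomPos)
    (hdir : DirectedOn (· ≤ᵐ[μ] ·) 𝒢) (hne : 𝒢.Nonempty) (hbdd : BddAbove (𝔈.E0 '' 𝒢)) :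
    ∃ g : ℕ → Ω → ℝ, (∀ n, g n ∈ 𝒢) ∧ (∀ᵐ ω ∂μ, Monotone fun n => g n ω) ∧
      Tendsto (fun n => 𝔈.E0 (g n)) atTop (nhds (sSup (𝔈.E0 '' 𝒢))) := by
  obtain ⟨u, -, hu, hu_mem⟩ := exists_seq_tendsto_sSup (hne.image 𝔈.E0) hbdd
  choose x hx hxu using hu_mem
  obtain ⟨g, hg, hxg, hgg⟩ := hdir.exists_seq_rel hx
  refine ⟨g, hg, ?_, ?_⟩
  · filter_upwards [ae_all_iff.2 hgg] with ω h using monotone_nat_of_le_succ h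
  · refine tendsto_of_tendsto_of_tendsto_of_le_of_le hu tendsto_const_nhds (fun n => ?_)
      fun n => le_csSup hbdd (mem_image_of_mem _ (hg n))
    rw [← hxu n]
    exact 𝔈.E0_mono hT (h𝒢 (hx n)) (h𝒢 (hg n)) (hxg n)

theorem ae_le_of_monotone_tendsto_sSup (hT : 0 ≤ T) {𝒢 : Set (Ω → ℝ)} (h𝒢 : 𝒢 ⊆ 𝔈.DomPos)
    (h𝒢m : ∀ g ∈ 𝒢, Measurable g) (hdir : DirectedOn (· ≤ᵐ[μ] ·) 𝒢)
    (hbdd : BddAbove (𝔈.E0 '' 𝒢)) {g : ℕ → Ω → ℝ} {G : Ω → ℝ} (hg : ∀ n, g n ∈ 𝒢)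
    (hmono : ∀ᵐ ω ∂μ, Monotone fun n => g n ω)
    (hlim : ∀ᵐ ω ∂μ, Tendsto (fun n => g n ω) atTop (nhds (G ω))) (hG : G ∈ 𝔈.DomPos)
    (hGm : Measurable G) (hGE : 𝔈.E0 G = sSup (𝔈.E0 '' 𝒢)) {f : Ω → ℝ} (hf : f ∈ 𝒢) :
    f ≤ᵐ[μ] G := by
  -- Each `f ⊔ g n` lies below a member of `𝒢`, so `E[f ⊔ G] ≤ sup E = E[G]`.
  choose h hh hfh hgh using fun n => hdir f hf (g n) (hg n)
  have hfg : ∀ n, f ⊔ g n ∈ 𝔈.DomPos := fun n =>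
    mem_domPos_of_ae_le (h𝒢 (hh n)) ((h𝒢 hf).2.mono fun _ h => h.trans le_sup_left)
      ((hfh n).sup_le (hgh n))
  have hfgE : ∀ n, 𝔈.E0 (f ⊔ g n) ≤ sSup (𝔈.E0 '' 𝒢) := fun n =>
    (𝔈.E0_mono hT (hfg n) (h𝒢 (hh n)) ((hfh n).sup_le (hgh n))).trans
      (le_csSup hbdd (mem_image_of_mem _ (hh n)))
  obtain ⟨hfG, hE⟩ := 𝔈.tendsto_E0_of_monotone hT hfg
    (fun n => (h𝒢m f hf).sup (h𝒢m _ (hg n))) ((h𝒢m f hf).sup hGm)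
    (hmono.mono fun _ h _ _ hab => sup_le_sup_left (h hab) _)
    (hlim.mono fun _ h => tendsto_const_nhds.max h) hfgE
  have hGfG : G =ᵐ[μ] f ⊔ G := 𝔈.ae_eq_of_le_of_E0_eq hT hG hfG
    (ae_of_all _ fun _ => le_sup_right)
    ((𝔈.E0_mono hT hG hfG (ae_of_all _ fun _ => le_sup_right)).antisymm
      (hGE ▸ le_of_tendsto' hE hfgE))
  filter_upwards [hGfG] with ω h
  exact h ▸ le_sup_left

theorem mem_domPos_and_E0_eq_of_isEssSupFam (hT : 0 ≤ T) {𝒢 : Set (Ω → ℝ)}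
    (h𝒢 : 𝒢 ⊆ 𝔈.DomPos) (h𝒢m : ∀ g ∈ 𝒢, Measurable g) (hdir : DirectedOn (· ≤ᵐ[μ] ·) 𝒢)
    (hne : 𝒢.Nonempty) (hbdd : BddAbove (𝔈.E0 '' 𝒢)) {v : Ω → ℝ} (hv : IsEssSupFam μ 𝒢 v) :
    v ∈ 𝔈.DomPos ∧ 𝔈.E0 v = sSup (𝔈.E0 '' 𝒢) := by
  obtain ⟨g, hg, hmono, hgE⟩ := 𝔈.exists_seq_tendsto_sSup_E0 hT h𝒢 hdir hne hbdd
  set G : Ω → ℝ := fun ω => ⨆ n, g n ω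
  have hGm : Measurable G := .iSup fun n => h𝒢m _ (hg n)
  have hgv : ∀ᵐ ω ∂μ, ∀ n, g n ω ≤ v ω := ae_all_iff.2 fun n => hv.1 _ (hg n)
  have hlim : ∀ᵐ ω ∂μ, Tendsto (fun n => g n ω) atTop (nhds (G ω)) := by
    filter_upwards [hmono, hgv] with ω hm hb
    exact tendsto_atTop_ciSup hm ⟨v ω, forall_mem_range.2 hb⟩
  obtain ⟨hG, hGE⟩ := 𝔈.tendsto_E0_of_monotone hT (fun n => h𝒢 (hg n))
    (fun n => h𝒢m _ (hg n)) hGm hmono hlim fun n => le_csSup hbdd (mem_image_of_mem _ (hg n))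
  have hGE' : 𝔈.E0 G = sSup (𝔈.E0 '' 𝒢) := tendsto_nhds_unique hGE hgE
  have hvG : v =ᵐ[μ] G := (hv.2 G fun f hf => 𝔈.ae_le_of_monotone_tendsto_sSup hT h𝒢 h𝒢m
    hdir hbdd hg hmono hlim hG hGm hGE' hf).antisymm (hgv.mono fun _ => ciSup_le)
  have hv' : v ∈ 𝔈.DomPos :=
    mem_domPos_of_ae_le hG (hG.2.trans hvG.symm.le) hvG.le
  exact ⟨hv', (𝔈.E0_congr hT hv' hG hvG).trans hGE'⟩

end FExp

theorem Admissible.mem_domPos (hX : Admissible 𝔈 X) (hτ : Stop0 ℱ T τ) : X τ ∈ 𝔈.DomPos :=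
  ⟨(hX.1 τ hτ).1, (hX.1 τ hτ).2.1⟩

theorem Admissible.indicator_ae_eq (hX : Admissible 𝔈 X) (hτ : Stop0 ℱ T τ)
    (hσ : Stop0 ℱ T σ) {A : Set Ω} (h : ∀ ω ∈ A, τ ω = σ ω) :
    A.indicator (X τ) =ᵐ[μ] A.indicator (X σ) := by
  filter_upwards [hX.2 τ σ hτ hσ] with ω hω
  by_cases hωA : ω ∈ A
  · simp [hωA, hω (h ω hωA)]
  · simp [hωA]

theorem Admissible.directedOn_cond (hX : Admissible 𝔈 X) (hS : Stop0 ℱ T S) :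
    DirectedOn (· ≤ᵐ[μ] ·) {g | ∃ τ, IsStopIn ℱ T S τ ∧ g = 𝔈.cond S (X τ)} := by
  classical
  rintro _ ⟨τ, hτ, rfl⟩ _ ⟨σ, hσ, rfl⟩
  have hτ0 := hτ.stop0 hS
  have hσ0 := hσ.stop0 hS
  set A := {ω | 𝔈.cond S (X σ) ω ≤ 𝔈.cond S (X τ) ω}
  have hA : MeasurableSet[hS.1.measurableSpace] A := measurableSet_le
    (𝔈.cond_adapted hS (hX.1 σ hσ0).1 (hX.1 σ hσ0).2.1)
    (𝔈.cond_adapted hS (hX.1 τ hτ0).1 (hX.1 τ hτ0).2.1)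
  have hρ := hS.piecewise hτ hσ hA
  have hρ0 := hρ.stop0 hS
  have hρτ := 𝔈.indicator_cond_congr hS hA (hX.mem_domPos hρ0) (hX.mem_domPos hτ0)
    (hX.indicator_ae_eq hρ0 hτ0 fun ω hω => piecewise_eq_of_mem _ _ _ hω)
  have hρσ := 𝔈.indicator_cond_congr hS hA.compl (hX.mem_domPos hρ0) (hX.mem_domPos hσ0)
    (hX.indicator_ae_eq hρ0 hσ0 fun ω hω => piecewise_eq_of_notMem _ _ _ hω)
  have hmax : 𝔈.cond S (X τ) ⊔ 𝔈.cond S (X σ) =ᵐ[μ] 𝔈.cond S (X (A.piecewise τ σ)) := by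
    filter_upwards [hρτ, hρσ] with ω h₁ h₂
    by_cases hω : ω ∈ A
    · simp only [indicator_of_mem hω] at h₁
      rw [Pi.sup_apply, h₁, sup_eq_left.2 hω]
    · simp only [indicator_of_mem (mem_compl hω)] at h₂
      rw [Pi.sup_apply, h₂, sup_eq_right.2 (not_le.1 hω).le]
  exact ⟨_, ⟨_, hρ, rfl⟩, EventuallyLE.trans (ae_of_all _ fun _ => le_sup_left) hmax.le,
    EventuallyLE.trans (ae_of_all _ fun _ => le_sup_right) hmax.le⟩

theorem IsValueFam.mem_domPos_and_E0_eq [NeZero μ] (hv : IsValueFam 𝔈 X v) (hT : 0 ≤ T)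
    (hX : Admissible 𝔈 X) (hbdd : BddRewardE0 𝔈 X) (hS : Stop0 ℱ T S) :
    v S ∈ 𝔈.DomPos ∧ 𝔈.E0 (v S) = sSup ((fun τ => 𝔈.E0 (X τ)) '' {τ | IsStopIn ℱ T S τ}) := by
  have hE0 : ∀ τ, IsStopIn ℱ T S τ → 𝔈.E0 (𝔈.cond S (X τ)) = 𝔈.E0 (X τ) := fun τ hτ =>
    𝔈.E0_cond hT hS (hX.mem_domPos (hτ.stop0 hS))
  have himage : 𝔈.E0 '' {g | ∃ τ, IsStopIn ℱ T S τ ∧ g = 𝔈.cond S (X τ)} =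
      (fun τ => 𝔈.E0 (X τ)) '' {τ | IsStopIn ℱ T S τ} := by
    ext r
    constructor
    · rintro ⟨_, ⟨τ, hτ, rfl⟩, rfl⟩
      exact ⟨τ, hτ, (hE0 τ hτ).symm⟩
    · rintro ⟨τ, hτ, rfl⟩
      exact ⟨_, ⟨τ, hτ, rfl⟩, hE0 τ hτ⟩
  obtain ⟨C, hC⟩ := hbdd
  rw [← himage]
  refine 𝔈.mem_domPos_and_E0_eq_of_isEssSupFam hT ?_ ?_ (hX.directedOn_cond hS)
    ⟨_, S, hS.self, rfl⟩ ⟨C, ?_⟩ (hv S hS)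
  · rintro _ ⟨τ, hτ, rfl⟩
    exact 𝔈.cond_mem_domPos hS (hX.mem_domPos (hτ.stop0 hS))
  · rintro _ ⟨τ, hτ, rfl⟩
    exact 𝔈.measurable_cond hS (hX.mem_domPos (hτ.stop0 hS))
  · rw [himage]
    rintro _ ⟨τ, hτ, rfl⟩
    exact hC τ (hτ.stop0 hS)

theorem IsValueFam.E0_le_E0 [NeZero μ] (hv : IsValueFam 𝔈 X v) (hT : 0 ≤ T)
    (hX : Admissible 𝔈 X) (hbdd : BddRewardE0 𝔈 X) (hS : Stop0 ℱ T S)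
    (hτ : IsStopIn ℱ T S τ) : 𝔈.E0 (v τ) ≤ 𝔈.E0 (v S) := by
  rw [(hv.mem_domPos_and_E0_eq hT hX hbdd hS).2,
    (hv.mem_domPos_and_E0_eq hT hX hbdd (hτ.stop0 hS)).2]
  obtain ⟨C, hC⟩ := hbdd
  refine csSup_le_csSup ⟨C, ?_⟩ ⟨_, τ, hτ.self, rfl⟩
    (image_mono fun σ hσ => hσ.mono_left hτ.2.1)
  rintro _ ⟨σ, hσ, rfl⟩
  exact hC σ (hσ.stop0 hS)

/-- characterization of optimal stopping times. -/
theorem optimal_tfae [IsProbabilityMeasure μ] (hT : 0 < T) (𝔈 : FExp μ T ℱ)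
    (X v : (Ω → ℝ) → Ω → ℝ) (hX : Admissible 𝔈 X) (hbdd : BddRewardE0 𝔈 X)
    (hv : IsValueFam 𝔈 X v)
    (S τs : Ω → ℝ) (hS : Stop0 ℱ T S) (hτs : IsStopIn ℱ T S τs) :
    -- (a) ↔ (b)
    ((v S =ᵐ[μ] 𝔈.cond S (X τs)) ↔
      (v τs =ᵐ[μ] X τs ∧ 𝔈.E0 (v S) = 𝔈.E0 (v τs))) ∧
    -- (a) ↔ (c)
    ((v S =ᵐ[μ] 𝔈.cond S (X τs)) ↔ 𝔈.E0 (v S) = 𝔈.E0 (X τs)) := by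
  have hτ0 : Stop0 ℱ T τs := hτs.stop0 hS
  have hvS := (hv.mem_domPos_and_E0_eq hT.le hX hbdd hS).1
  have hvτ := (hv.mem_domPos_and_E0_eq hT.le hX hbdd hτ0).1
  have hXτ := hX.mem_domPos hτ0
  have hcond := 𝔈.cond_mem_domPos hS hXτ
  have hcond_le : 𝔈.cond S (X τs) ≤ᵐ[μ] v S := (hv S hS).1 _ ⟨τs, hτs, rfl⟩
  have hX_le : X τs ≤ᵐ[μ] v τs := (𝔈.cond_of_measurable hτ0 hXτ (hX.1 τs hτ0).2.2).symm.le.trans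
    ((hv τs hτ0).1 _ ⟨τs, hτ0.self, rfl⟩)
  have hE_cond : 𝔈.E0 (𝔈.cond S (X τs)) = 𝔈.E0 (X τs) := 𝔈.E0_cond hT.le hS hXτ
  have hE_X : 𝔈.E0 (X τs) ≤ 𝔈.E0 (v τs) := 𝔈.E0_mono hT.le hXτ hvτ hX_le
  have hE_v : 𝔈.E0 (v τs) ≤ 𝔈.E0 (v S) := hv.E0_le_E0 hT.le hX hbdd hS hτs
  have hac : (v S =ᵐ[μ] 𝔈.cond S (X τs)) ↔ 𝔈.E0 (v S) = 𝔈.E0 (X τs) :=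
    ⟨fun h => (𝔈.E0_congr hT.le hvS hcond h).trans hE_cond, fun h =>
      (𝔈.ae_eq_of_le_of_E0_eq hT.le hcond hvS hcond_le (hE_cond.trans h.symm)).symm⟩
  refine ⟨hac.trans ⟨fun h => ?_, fun ⟨h₁, h₂⟩ => h₂.trans (𝔈.E0_congr hT.le hvτ hXτ h₁)⟩, hac⟩
  have hE_vX : 𝔈.E0 (v τs) = 𝔈.E0 (X τs) := by linarith
  exact ⟨(𝔈.ae_eq_of_le_of_E0_eq hT.le hXτ hvτ hX_le hE_vX.symm).symm, h.trans hE_vX.symm⟩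

end OptMultStop
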